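/- Let 𝔬 be a compact discrete valuation ring with maximal ideal 𝔭 and finite residue field, let ℓ ≥ 1, 𝔬_ℓ = 𝔬/𝔭^ℓ, δ ∈ π𝔬_ℓ, and let J(𝔬_ℓ) ⊆ GL₃(𝔬_ℓ) be the centralizer of c = [[0,0,1],[0,δ,0],[δ²,0,0]]. The kernel of the homomorphism Δ : J(𝔬_ℓ) → 𝔬_ℓ^× × 𝔬_ℓ^×, Δ(g) = (a − δz, b(a + δz) − 2δxy), consists exactly of the matrices [[1+δz, x, z], [δy, (1+2δxy)(1+2δz)^{−1}, y], [δ²z, δx, 1+δz]] with x, y, z ∈ 𝔬_ℓ. -/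

import Mathlib

open Matrix

/-- The map `Δ` reading off `(a - δz, b(a + δz) - 2δxy)` from a matrix
`[[a,x,z],[δy,b,y],[δ²z,δx,a]]`. -/
def JDelta {R : Type*} [CommRing R] (δ : R) (X : Matrix (Fin 3) (Fin 3) R) : R × R :=
  (X 0 0 - δ * X 0 2, X 1 1 * (X 0 0 + δ * X 0 2) - 2 * δ * X 0 1 * X 1 2)

/-! The commutation relation `U c = c U` forces `U` into the shape `[[a,x,z],[δy,b,y],[δ²z,δx,a]]`,
on which `Δ = 1` says `a = 1 + δz` and `b (1 + 2δz) = 1 + 2δxy`. Since `δ` is the image of an element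
of `𝔭` and `𝔭^ℓ` is killed, `δ` is nilpotent, so `1 + 2δz` is a unit and `b` is determined. -/

theorem isNilpotent_map_of_pow_le_ker {O R : Type*} [CommRing O] [Semiring R] (q : O →+* R)
    {I : Ideal O} {ℓ : ℕ} (hker : I ^ ℓ ≤ RingHom.ker q) {d : O} (hd : d ∈ I) :
    IsNilpotent (q d) :=
  ⟨ℓ, by rw [← map_pow, ← RingHom.mem_ker]; exact hker (Ideal.pow_mem_pow hd ℓ)⟩

section Centralizer

variable {R : Type*} [CommRing R] (δ : R)

def cMatrix : Matrix (Fin 3) (Fin 3) R := !![0, 0, 1; 0, δ, 0; δ ^ 2, 0, 0]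

def jMatrix (a b x y z : R) : Matrix (Fin 3) (Fin 3) R :=
  !![a, x, z; δ * y, b, y; δ ^ 2 * z, δ * x, a]

variable {δ}

theorem jMatrix_inj {a b x y z a' b' x' y' z' : R} :
    jMatrix δ a b x y z = jMatrix δ a' b' x' y' z' ↔
      a = a' ∧ b = b' ∧ x = x' ∧ y = y' ∧ z = z' := by
  refine ⟨fun h => ?_, by rintro ⟨rfl, rfl, rfl, rfl, rfl⟩; rfl⟩
  have entry (i j : Fin 3) := congrFun (congrFun h i) j
  exact ⟨entry 0 0, entry 1 1, entry 0 1, entry 1 2, entry 0 2⟩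

theorem eq_jMatrix_of_mul_cMatrix_comm {U : Matrix (Fin 3) (Fin 3) R}
    (hU : U * cMatrix δ = cMatrix δ * U) :
    U = jMatrix δ (U 0 0) (U 1 1) (U 0 1) (U 1 2) (U 0 2) := by
  have entry (i j : Fin 3) := congrFun (congrFun hU i) j
  have h02 := entry 0 2; have h12 := entry 1 2; have h22 := entry 2 2; have h01 := entry 0 1
  simp only [cMatrix, mul_apply, of_apply, cons_val', cons_val, cons_val_fin_one,
    Fin.sum_univ_three, cons_val_zero, cons_val_one, mul_one, mul_zero, add_zero, zero_mul, one_mul,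
    zero_add] at h02 h12 h22 h01
  ext i j
  fin_cases i <;> fin_cases j <;> simp [jMatrix, h12, h22, ← h01, ← h02, mul_comm]

theorem jDelta_jMatrix_eq_one_iff {a b x y z : R} (hunit : IsUnit (1 + 2 * δ * z)) :
    JDelta δ (jMatrix δ a b x y z) = 1 ↔
      a = 1 + δ * z ∧ b = (1 + 2 * δ * x * y) * Ring.inverse (1 + 2 * δ * z) := by
  rw [Ring.eq_mul_inverse_iff_mul_eq _ _ _ hunit]
  simp only [JDelta, jMatrix, Prod.ext_iff, Prod.fst_one, Prod.snd_one, of_apply, cons_val',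
    cons_val_zero, cons_val_one, cons_val_two, empty_val', cons_val_fin_one, head_cons, tail_cons]
  constructor
  · rintro ⟨ha, hb⟩
    exact ⟨by linear_combination ha, by linear_combination hb - b * ha⟩
  · rintro ⟨rfl, hb⟩
    exact ⟨by ring, by linear_combination hb⟩

end Centralizer

theorem kernel_of_Delta (O : Type*) [CommRing O] [IsDomain O] [IsDiscreteValuationRing O] (ℓ : ℕ)
    (R : Type*) [CommRing R] (q : O →+* R)
    (hker : RingHom.ker q = IsLocalRing.maximalIdeal O ^ ℓ)
    (δ : R) (hδ : ∃ d ∈ IsLocalRing.maximalIdeal O, δ = q d)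
    (c : Matrix (Fin 3) (Fin 3) R) (hc : c = !![0, 0, 1; 0, δ, 0; δ ^ 2, 0, 0])
    (u : (Matrix (Fin 3) (Fin 3) R)ˣ)
    (hu : (u : Matrix (Fin 3) (Fin 3) R) * c = c * u) :
    JDelta δ (u : Matrix (Fin 3) (Fin 3) R) = 1 ↔
      ∃ x y z : R, IsUnit (1 + 2 * δ * z) ∧
        (u : Matrix (Fin 3) (Fin 3) R) =
          !![1 + δ * z, x, z;
             δ * y, (1 + 2 * δ * x * y) * Ring.inverse (1 + 2 * δ * z), y;
             δ ^ 2 * z, δ * x, 1 + δ * z] := by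
  obtain ⟨d, hd, rfl⟩ := hδ
  have hnil : IsNilpotent (q d) := isNilpotent_map_of_pow_le_ker q hker.ge hd
  have hunit (z : R) : IsUnit (1 + 2 * q d * z) :=
    ((Commute.all _ _).isNilpotent_mul_right
      ((Commute.all _ _).isNilpotent_mul_left hnil)).isUnit_one_add
  subst hc
  generalize (u : Matrix (Fin 3) (Fin 3) R) = U at hu ⊢
  rw [eq_jMatrix_of_mul_cMatrix_comm hu]
  generalize U 0 0 = a, U 1 1 = b, U 0 1 = x, U 1 2 = y, U 0 2 = z
  rw [jDelta_jMatrix_eq_one_iff (hunit z)]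
  constructor
  · rintro ⟨rfl, rfl⟩
    exact ⟨x, y, z, hunit z, rfl⟩
  · rintro ⟨x', y', z', -, h⟩
    obtain ⟨rfl, rfl, rfl, rfl, rfl⟩ := jMatrix_inj.mp h
    exact ⟨rfl, rfl⟩
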